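/- Let ρ : T³ → ℝ be smooth and positive. Then ∫_{T³} |∇²(√ρ)|² dx ≤ 7 ∫_{T³} ρ |∇²(log ρ)|² dx, where |·| denotes the Frobenius norm of the Hessian matrix. -/

import Mathlib

open MeasureTheory Real

/-- Partial derivative in direction `i`. -/
noncomputable def pd (i : Fin 3) (f : (Fin 3 → ℝ) → ℝ) : (Fin 3 → ℝ) → ℝ :=
  fun x => fderiv ℝ f x (Pi.single i 1)

/-- The fundamental domain of the 3-torus, the unit cube. -/
def T3 : Set (Fin 3 → ℝ) := Set.univ.pi fun _ => Set.Icc 0 1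

/-- `f` is 1-periodic in each coordinate direction. -/
def Periodic3 (f : (Fin 3 → ℝ) → ℝ) : Prop :=
  ∀ (x : Fin 3 → ℝ) (i : Fin 3), f (x + Pi.single i 1) = f x


section toolkit

variable {f g : (Fin 3 → ℝ) → ℝ} {x : Fin 3 → ℝ} (k : Fin 3)

lemma pd_mul (hf : DifferentiableAt ℝ f x) (hg : DifferentiableAt ℝ g x) :
    pd k (fun y => f y * g y) x = pd k f x * g x + f x * pd k g x := by
  have h : HasFDerivAt (fun y => f y * g y) _ x := hf.hasFDerivAt.mul hg.hasFDerivAt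
  simp only [pd, h.fderiv, ContinuousLinearMap.add_apply, ContinuousLinearMap.smul_apply,
    smul_eq_mul]
  ring

lemma pd_inv (hf : DifferentiableAt ℝ f x) (hx : f x ≠ 0) :
    pd k (fun y => (f y)⁻¹) x = -pd k f x / f x ^ 2 := by
  have h : HasFDerivAt (fun y => (f y)⁻¹) ((-(f x ^ 2)⁻¹) • fderiv ℝ f x) x :=
    (hasDerivAt_inv hx).comp_hasFDerivAt x hf.hasFDerivAt
  simp only [pd, h.fderiv, ContinuousLinearMap.smul_apply, smul_eq_mul]
  field_simp

lemma pd_div (hf : DifferentiableAt ℝ f x) (hg : DifferentiableAt ℝ g x) (hx : g x ≠ 0) :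
    pd k (fun y => f y / g y) x = (pd k f x * g x - f x * pd k g x) / g x ^ 2 := by
  have h : (fun y => f y / g y) = fun y => f y * (g y)⁻¹ := funext fun y => div_eq_mul_inv _ _
  rw [h, pd_mul k (g := fun y => (g y)⁻¹) hf (hg.inv hx), pd_inv k hg hx]
  field_simp
  ring

lemma pd_log (hf : DifferentiableAt ℝ f x) (hx : f x ≠ 0) :
    pd k (fun y => Real.log (f y)) x = pd k f x / f x := by
  have h : HasFDerivAt (fun y => Real.log (f y)) ((f x)⁻¹ • fderiv ℝ f x) x :=
    (Real.hasDerivAt_log hx).comp_hasFDerivAt x hf.hasFDerivAt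
  simp only [pd, h.fderiv, ContinuousLinearMap.smul_apply, smul_eq_mul]
  field_simp

lemma pd_const_mul (c : ℝ) (hf : DifferentiableAt ℝ f x) :
    pd k (fun y => c * f y) x = c * pd k f x := by
  simp only [pd, fderiv_const_mul hf c, ContinuousLinearMap.smul_apply, smul_eq_mul]

lemma contDiff_pd (hf : ContDiff ℝ (⊤ : ℕ∞) f) : ContDiff ℝ (⊤ : ℕ∞) (pd k f) :=
  (hf.fderiv_right (by simp)).clm_apply contDiff_const

lemma diffAt_div {x : Fin 3 → ℝ} (hf : DifferentiableAt ℝ f x) (hg : DifferentiableAt ℝ g x)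
    (hx : g x ≠ 0) : DifferentiableAt ℝ (fun y => f y / g y) x := by
  simp only [div_eq_mul_inv]
  exact hf.mul (hg.inv hx)

lemma pd_periodic (hf : Differentiable ℝ f) (hp : Periodic3 f) :
    Periodic3 (pd k f) := by
  intro x i
  have h2 : (fun y => f (y + Pi.single i 1)) = f := funext fun y => hp y i
  have h1 : HasFDerivAt (fun y => f (y + Pi.single i 1)) (fderiv ℝ f (x + Pi.single i 1)) x := by
    have ht : HasFDerivAt (fun y : Fin 3 → ℝ => y + Pi.single i 1)
        (ContinuousLinearMap.id ℝ (Fin 3 → ℝ)) x := (hasFDerivAt_id x).add_const _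
    simpa [Function.comp_def] using (hf (x + Pi.single i 1)).hasFDerivAt.comp x ht
  have h3 : fderiv ℝ f x = fderiv ℝ f (x + Pi.single i 1) := by
    calc fderiv ℝ f x = fderiv ℝ (fun y => f (y + Pi.single i 1)) x := by rw [h2]
      _ = fderiv ℝ f (x + Pi.single i 1) := h1.fderiv
  simp only [pd, ← h3]

end toolkit

lemma T3_eq : T3 = Set.Icc (0 : Fin 3 → ℝ) 1 := by
  rw [← Set.pi_univ_Icc]; rfl

lemma insertNth_one_eq (i : Fin 3) (y : Fin 2 → ℝ) :
    (Fin.insertNth i (1 : ℝ) y : Fin 3 → ℝ) =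
      (Fin.insertNth i (0 : ℝ) y : Fin 3 → ℝ) + Pi.single i 1 := by
  funext j
  rcases eq_or_ne j i with rfl | hj
  · simp
  · obtain ⟨k, rfl⟩ := Fin.exists_succAbove_eq hj
    simp [Fin.succAbove_ne i k]

lemma integral_pd_zero {g : (Fin 3 → ℝ) → ℝ} (hg : ContDiff ℝ (⊤ : ℕ∞) g) (hp : Periodic3 g)
    (i : Fin 3) : ∫ x in T3, pd i g x = 0 := by
  have hcont : Continuous (pd i g) := (contDiff_pd i hg).continuous
  set F : (Fin 3 → ℝ) → (Fin 3 → ℝ) := fun x => Pi.single i (g x) with hF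
  set F' : (Fin 3 → ℝ) → (Fin 3 → ℝ) →L[ℝ] (Fin 3 → ℝ) :=
    fun x => ContinuousLinearMap.pi (Pi.single i (fderiv ℝ g x)) with hF'
  have hdiv : ∀ x, (∑ j : Fin 3, F' x (Pi.single j 1) j) = pd i g x := by
    intro x
    rw [Finset.sum_eq_single i]
    · simp [hF', ContinuousLinearMap.pi_apply, pd]
    · intro j _ hj
      simp [hF', ContinuousLinearMap.pi_apply, Pi.single_eq_of_ne hj]
    · simp
  have hder : ∀ x, HasFDerivAt F (F' x) x := by
    intro x
    apply hasFDerivAt_pi.2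
    intro j
    rcases eq_or_ne j i with rfl | hj
    · simp only [hF, hF', Pi.single_eq_same]
      exact (hg.differentiable (by simp) x).hasFDerivAt
    · simp only [hF, hF', Pi.single_eq_of_ne hj]
      exact hasFDerivAt_const 0 x
  have hFc : Continuous F := by
    apply continuous_pi
    intro j
    rcases eq_or_ne j i with rfl | hj
    · simp only [hF, Pi.single_eq_same]; exact hg.continuous
    · simp only [hF, Pi.single_eq_of_ne hj]; exact continuous_const
  have hle : (0 : Fin 3 → ℝ) ≤ 1 := fun _ => zero_le_one
  have hdin : (fun x => ∑ j : Fin 3, F' x (Pi.single j 1) j) = pd i g := funext hdiv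
  have key := MeasureTheory.integral_divergence_of_hasFDerivAt_off_countable (n := 2)
      (0 : Fin 3 → ℝ) 1 hle F F' ∅ Set.countable_empty hFc.continuousOn
      (fun x _ => hder x)
      (by rw [hdin]; exact hcont.integrableOn_Icc)
  rw [hdin] at key
  rw [T3_eq, key]
  apply Finset.sum_eq_zero
  intro j _
  rcases eq_or_ne j i with rfl | hj
  · have heq : ∀ y : Fin 2 → ℝ,
        F (Fin.insertNth j ((1 : Fin 3 → ℝ) j) y) j
          = F (Fin.insertNth j ((0 : Fin 3 → ℝ) j) y) j := by
      intro y
      simp only [hF, Pi.single_eq_same, Pi.one_apply, Pi.zero_apply]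
      rw [insertNth_one_eq]
      exact hp _ j
    rw [sub_eq_zero]
    exact setIntegral_congr_fun (by measurability) (fun y _ => heq y)
  · have h0 : ∀ (z : Fin 3 → ℝ), F z j = 0 := fun z => Pi.single_eq_of_ne hj _
    simp [h0]

section main

variable {ρ : (Fin 3 → ℝ) → ℝ}

lemma sqrt_contDiff (hρ : ContDiff ℝ (⊤ : ℕ∞) ρ) (hpos : ∀ x, 0 < ρ x) :
    ContDiff ℝ (⊤ : ℕ∞) (fun y => Real.sqrt (ρ y)) :=
  contDiff_iff_contDiffAt.2 fun x => (Real.contDiffAt_sqrt (hpos x).ne').comp x hρ.contDiffAt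

lemma hlog1 (hρ : ContDiff ℝ (⊤ : ℕ∞) ρ) (hpos : ∀ x, 0 < ρ x) (j : Fin 3) :
    pd j (fun y => Real.log (ρ y)) = fun x =>
      2 * (pd j (fun y => Real.sqrt (ρ y)) x / Real.sqrt (ρ x)) := by
  funext x
  have hud : Differentiable ℝ (fun y => Real.sqrt (ρ y)) :=
    (sqrt_contDiff hρ hpos).differentiable (by simp)
  rw [pd_log j (hρ.differentiable (by simp) x) (hpos x).ne']
  have hρu : ρ = fun y => Real.sqrt (ρ y) * Real.sqrt (ρ y) :=
    funext fun y => (Real.mul_self_sqrt (hpos y).le).symm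
  set s := Real.sqrt (ρ x) with hs
  have hpdρ : pd j ρ x = pd j (fun y => Real.sqrt (ρ y)) x * s
      + s * pd j (fun y => Real.sqrt (ρ y)) x := by
    conv_lhs => rw [hρu]
    exact pd_mul j (hud x) (hud x)
  have h0 : s ≠ 0 := (Real.sqrt_pos.2 (hpos x)).ne'
  have key : ρ x = s * s := (Real.mul_self_sqrt (hpos x).le).symm
  rw [hpdρ, key]
  field_simp
  ring

lemma pd_pd_log (hρ : ContDiff ℝ (⊤ : ℕ∞) ρ) (hpos : ∀ x, 0 < ρ x) (i j : Fin 3) (x : Fin 3 → ℝ) :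
    pd i (pd j (fun y => Real.log (ρ y))) x =
      2 * ((pd i (pd j (fun y => Real.sqrt (ρ y))) x
        - pd i (fun y => Real.sqrt (ρ y)) x * pd j (fun y => Real.sqrt (ρ y)) x
            / Real.sqrt (ρ x)) / Real.sqrt (ρ x)) := by
  have hud : Differentiable ℝ (fun y => Real.sqrt (ρ y)) :=
    (sqrt_contDiff hρ hpos).differentiable (by simp)
  have hvd : Differentiable ℝ (pd j (fun y => Real.sqrt (ρ y))) :=
    (contDiff_pd j (sqrt_contDiff hρ hpos)).differentiable (by simp)
  have h0 : ∀ z, Real.sqrt (ρ z) ≠ 0 := fun z => (Real.sqrt_pos.2 (hpos z)).ne'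
  rw [hlog1 hρ hpos j]
  have e0 : pd i (fun x => 2 * (pd j (fun y => Real.sqrt (ρ y)) x / Real.sqrt (ρ x))) x
      = 2 * pd i (fun x => pd j (fun y => Real.sqrt (ρ y)) x / Real.sqrt (ρ x)) x :=
    pd_const_mul i 2 (diffAt_div (hvd x) (hud x) (h0 x))
  rw [e0]
  have e1 : pd i (fun x => pd j (fun y => Real.sqrt (ρ y)) x / Real.sqrt (ρ x)) x
      = (pd i (pd j (fun y => Real.sqrt (ρ y))) x * Real.sqrt (ρ x)
          - pd j (fun y => Real.sqrt (ρ y)) x * pd i (fun y => Real.sqrt (ρ y)) x)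
        / Real.sqrt (ρ x) ^ 2 := pd_div i (hvd x) (hud x) (h0 x)
  rw [e1]
  field_simp [h0 x]

lemma pointwise_id (u : (Fin 3 → ℝ) → ℝ) (hu : ContDiff ℝ (⊤ : ℕ∞) u) (hu0 : ∀ x, 0 < u x)
    (i j : Fin 3) (x : Fin 3 → ℝ) :
    (pd i (pd j u) x - pd i u x * pd j u x / u x) ^ 2
      = (pd i (pd j u) x) ^ 2
        + pd i (pd i u) x * (pd j u x * pd j u x) / u x
        - pd i (fun z => pd i u z * (pd j u z * pd j u z) / u z) x := by
  have hud := hu.differentiable (by simp)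
  have hvd : ∀ k, Differentiable ℝ (pd k u) := fun k => (contDiff_pd k hu).differentiable (by simp)
  have h0 := (hu0 x).ne'
  have e1 : pd i (fun z => pd j u z * pd j u z) x
      = pd i (pd j u) x * pd j u x + pd j u x * pd i (pd j u) x :=
    pd_mul i (hvd j x) (hvd j x)
  have e2 : pd i (fun z => pd i u z * (pd j u z * pd j u z)) x
      = pd i (pd i u) x * (pd j u x * pd j u x)
        + pd i u x * (pd i (pd j u) x * pd j u x + pd j u x * pd i (pd j u) x) := by
    have h := pd_mul i (g := fun z => pd j u z * pd j u z) (hvd i x) ((hvd j x).mul (hvd j x))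
    rw [e1] at h
    exact h
  have e3 : pd i (fun z => pd i u z * (pd j u z * pd j u z) / u z) x
      = ((pd i (pd i u) x * (pd j u x * pd j u x)
          + pd i u x * (pd i (pd j u) x * pd j u x + pd j u x * pd i (pd j u) x)) * u x
          - pd i u x * (pd j u x * pd j u x) * pd i u x) / u x ^ 2 := by
    have h := pd_div i (f := fun z => pd i u z * (pd j u z * pd j u z)) ((hvd i x).mul ((hvd j x).mul (hvd j x))) (hud x) h0
    rw [e2] at h
    exact h
  rw [e3]
  field_simp
  ring

lemma key_ineq (u : (Fin 3 → ℝ) → ℝ) (hu : ContDiff ℝ (⊤ : ℕ∞) u) (hu0 : ∀ x, 0 < u x)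
    (hup : Periodic3 u) :
    (∫ x in T3, ∑ i : Fin 3, ∑ j : Fin 3, (pd i (pd j u) x) ^ 2)
      ≤ (7 / 4) * ∫ x in T3, ∑ i : Fin 3, ∑ j : Fin 3,
          (pd i (pd j u) x - pd i u x * pd j u x / u x) ^ 2 := by
  have hud := hu.differentiable (by simp)
  have hne : ∀ x, u x ≠ 0 := fun x => (hu0 x).ne'
  have hvp : ∀ m : Fin 3, Periodic3 (pd m u) := fun m => pd_periodic m hud hup
  have hmT : MeasurableSet T3 := by rw [T3_eq]; exact measurableSet_Icc
  have hIOn : ∀ {h : (Fin 3 → ℝ) → ℝ}, Continuous h → IntegrableOn h T3 volume := by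
    intro h hh; rw [T3_eq]; exact hh.integrableOn_Icc
  have hvc : ∀ k : Fin 3, Continuous (pd k u) := fun k => (contDiff_pd k hu).continuous
  have hAc : ∀ i j : Fin 3, Continuous (pd i (pd j u)) :=
    fun i j => (contDiff_pd i (contDiff_pd j hu)).continuous
  have hGc : ∀ i j : Fin 3,
      Continuous (fun x => pd i (pd j u) x - pd i u x * pd j u x / u x) :=
    fun i j => (hAc i j).sub (((hvc i).mul (hvc j)).div hu.continuous hne)
  set P : (Fin 3 → ℝ) → ℝ := fun x => ∑ i : Fin 3, ∑ j : Fin 3, (pd i (pd j u) x) ^ 2 with hP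
  set Q : (Fin 3 → ℝ) → ℝ := fun x => ∑ i : Fin 3, ∑ j : Fin 3,
      (pd i (pd j u) x - pd i u x * pd j u x / u x) ^ 2 with hQ
  set E : (Fin 3 → ℝ) → ℝ := fun x => ∑ i : Fin 3, ∑ j : Fin 3,
      pd i (pd i u) x * (pd j u x * pd j u x) / u x with hE
  set D : (Fin 3 → ℝ) → ℝ := fun x => ∑ i : Fin 3, ∑ j : Fin 3,
      pd i (fun z => pd i u z * (pd j u z * pd j u z) / u z) x with hD
  have hPc : Continuous P := continuous_finset_sum _ fun i _ =>
    continuous_finset_sum _ fun j _ => (hAc i j).pow 2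
  have hQc : Continuous Q := continuous_finset_sum _ fun i _ =>
    continuous_finset_sum _ fun j _ => (hGc i j).pow 2
  have hEc : Continuous E := continuous_finset_sum _ fun i _ =>
    continuous_finset_sum _ fun j _ =>
      ((hAc i i).mul ((hvc j).mul (hvc j))).div hu.continuous hne
  have hgf : ∀ i j : Fin 3, ContDiff ℝ (⊤ : ℕ∞) (fun z => pd i u z * (pd j u z * pd j u z) / u z) :=
    fun i j => ((contDiff_pd i hu).mul ((contDiff_pd j hu).mul (contDiff_pd j hu))).div hu hne
  have hDc : Continuous D := continuous_finset_sum _ fun i _ =>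
    continuous_finset_sum _ fun j _ => (contDiff_pd i (hgf i j)).continuous
  have hpt : ∀ x, Q x = P x + E x - D x := by
    intro x
    have h1 : ∀ i j : Fin 3,
        (pd i (pd j u) x - pd i u x * pd j u x / u x) ^ 2
          = (pd i (pd j u) x) ^ 2
            + pd i (pd i u) x * (pd j u x * pd j u x) / u x
            - pd i (fun z => pd i u z * (pd j u z * pd j u z) / u z) x :=
      fun i j => pointwise_id u hu hu0 i j x
    simp only [hP, hQ, hE, hD, h1, Finset.sum_add_distrib, Finset.sum_sub_distrib]
  have hDzero : (∫ x in T3, D x) = 0 := by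
    have hperg : ∀ i j : Fin 3, Periodic3 (fun z => pd i u z * (pd j u z * pd j u z) / u z) := by
      intro i j x k
      show pd i u (x + Pi.single k 1) * _ / u (x + Pi.single k 1) = _
      rw [hvp i x k, hvp j x k, hup x k]
    simp only [hD]
    rw [integral_finset_sum _ fun i _ => (hIOn (continuous_finset_sum _ fun j _ =>
      (contDiff_pd i (hgf i j)).continuous))]
    rw [Finset.sum_congr rfl fun i _ => integral_finset_sum _ fun j _ =>
      (hIOn (contDiff_pd i (hgf i j)).continuous)]
    refine Finset.sum_eq_zero fun i _ => Finset.sum_eq_zero fun j _ => ?_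
    exact integral_pd_zero (hgf i j) (hperg i j) i
  have hsplit : (∫ x in T3, Q x) = (∫ x in T3, P x) + ∫ x in T3, E x := by
    have hfun : (fun x => Q x) = fun x => P x + E x - D x := funext hpt
    rw [hfun, integral_sub (f := fun x => P x + E x) (hIOn (hPc.add hEc)) (hIOn hDc),
      integral_add (hIOn hPc) (hIOn hEc), hDzero, sub_zero]
  have hptE : ∀ x, -(3 / 4) * Q x ≤ E x := by
    intro x
    set a : ℝ := ∑ i : Fin 3, pd i (pd i u) x with ha
    set b : ℝ := ∑ i : Fin 3, (pd i (pd i u) x - pd i u x * pd i u x / u x) with hb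
    have hEx : E x = a * (a - b) := by
      have h1 : ∀ i : Fin 3, (∑ j : Fin 3, pd i (pd i u) x * (pd j u x * pd j u x) / u x)
          = pd i (pd i u) x * ∑ j : Fin 3, pd j u x * pd j u x / u x := by
        intro i
        rw [Finset.mul_sum]
        exact Finset.sum_congr rfl fun j _ => mul_div_assoc _ _ _
      have h2 : (∑ j : Fin 3, pd j u x * pd j u x / u x) = a - b := by
        rw [hb, Finset.sum_sub_distrib, ← ha]
        ring
      simp only [hE, h1, h2, ← Finset.sum_mul, ← ha]
    have hb2 : b ^ 2 ≤ 3 * ∑ i : Fin 3,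
        (pd i (pd i u) x - pd i u x * pd i u x / u x) ^ 2 := by
      have h3 := sq_sum_le_card_mul_sum_sq (s := (Finset.univ : Finset (Fin 3)))
        (f := fun i => pd i (pd i u) x - pd i u x * pd i u x / u x)
      simpa [← hb, Finset.card_univ] using h3
    have hdiag : (∑ i : Fin 3, (pd i (pd i u) x - pd i u x * pd i u x / u x) ^ 2) ≤ Q x := by
      simp only [hQ]
      exact Finset.sum_le_sum fun i _ =>
        Finset.single_le_sum (f := fun j => (pd i (pd j u) x - pd i u x * pd j u x / u x) ^ 2)
          (fun j _ => sq_nonneg _) (Finset.mem_univ i)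
    rw [hEx]
    nlinarith [sq_nonneg (a - b / 2)]
  have hQ0 : 0 ≤ ∫ x in T3, Q x :=
    setIntegral_nonneg hmT fun x _ => Finset.sum_nonneg fun i _ =>
      Finset.sum_nonneg fun j _ => sq_nonneg _
  have hEbound : -(3 / 4) * (∫ x in T3, Q x) ≤ ∫ x in T3, E x := by
    have hmono := setIntegral_mono_on (s := T3) (μ := volume)
      ((hIOn hQc).const_mul (-(3/4) : ℝ)) (hIOn hEc) hmT fun x _ => hptE x
    calc -(3 / 4) * (∫ x in T3, Q x) = ∫ x in T3, -(3/4) * Q x := by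
          rw [integral_const_mul]
      _ ≤ ∫ x in T3, E x := hmono
  show (∫ x in T3, P x) ≤ (7 / 4) * ∫ x in T3, Q x
  linarith [hsplit, hEbound, hQ0]

end main

theorem jungel_second_inequality
    (ρ : (Fin 3 → ℝ) → ℝ) (hρ : ContDiff ℝ (⊤ : ℕ∞) ρ) (hpos : ∀ x, 0 < ρ x)
    (hper : Periodic3 ρ) :
    (∫ x in T3, ∑ i : Fin 3, ∑ j : Fin 3,
        (pd i (pd j (fun y => Real.sqrt (ρ y))) x) ^ 2)
      ≤ 7 * ∫ x in T3, ρ x *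
          ∑ i : Fin 3, ∑ j : Fin 3,
            (pd i (pd j (fun y => Real.log (ρ y))) x) ^ 2 := by
  have hu : ContDiff ℝ (⊤ : ℕ∞) (fun y => Real.sqrt (ρ y)) := sqrt_contDiff hρ hpos
  have hu0 : ∀ x, 0 < Real.sqrt (ρ x) := fun x => Real.sqrt_pos.2 (hpos x)
  have hup : Periodic3 (fun y => Real.sqrt (ρ y)) := by
    intro x i
    show Real.sqrt (ρ (x + Pi.single i 1)) = Real.sqrt (ρ x)
    rw [hper x i]
  have key := key_ineq (fun y => Real.sqrt (ρ y)) hu hu0 hup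
  beta_reduce at key
  have hR : (fun x => ρ x * ∑ i : Fin 3, ∑ j : Fin 3,
        (pd i (pd j (fun y => Real.log (ρ y))) x) ^ 2)
      = fun x => 4 * ∑ i : Fin 3, ∑ j : Fin 3,
          (pd i (pd j (fun y => Real.sqrt (ρ y))) x
            - pd i (fun y => Real.sqrt (ρ y)) x * pd j (fun y => Real.sqrt (ρ y)) x
              / Real.sqrt (ρ x)) ^ 2 := by
    funext x
    have key2 : ∀ g : ℝ, (2 * (g / Real.sqrt (ρ x))) ^ 2 = 4 * g ^ 2 / ρ x := by
      intro g
      rw [mul_pow, div_pow, Real.sq_sqrt (hpos x).le]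
      ring
    have step : ∀ f : Fin 3 → Fin 3 → ℝ,
        (∑ i : Fin 3, ∑ j : Fin 3, (4 * f i j / ρ x))
          = 4 * (∑ i : Fin 3, ∑ j : Fin 3, f i j) / ρ x := by
      intro f
      rw [Finset.mul_sum, Finset.sum_div]
      refine Finset.sum_congr rfl fun i _ => ?_
      rw [Finset.mul_sum, Finset.sum_div]
    simp only [pd_pd_log hρ hpos, key2, step]
    rw [mul_comm]
    exact div_mul_cancel₀ _ (hpos x).ne'
  rw [hR, integral_const_mul]
  have hQ0 : 0 ≤ ∫ x in T3, ∑ i : Fin 3, ∑ j : Fin 3,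
      (pd i (pd j (fun y => Real.sqrt (ρ y))) x
        - pd i (fun y => Real.sqrt (ρ y)) x * pd j (fun y => Real.sqrt (ρ y)) x
          / Real.sqrt (ρ x)) ^ 2 := by
    apply setIntegral_nonneg
    · rw [T3_eq]; exact measurableSet_Icc
    · exact fun x _ => Finset.sum_nonneg fun i _ => Finset.sum_nonneg fun j _ => sq_nonneg _
  linarith [key, hQ0]
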